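/- arXiv:1710.06384 — 4 statements merged into one kernel-verified Lean document; each statement's English description precedes it below -/
import Mathlib

section
/- Let P, W, W' ⊆ ℝ^d be polytopes, each of dimension d (i.e. each has affine span equal to ℝ^d). Suppose F is a facet of P, a facet of W, and a facet of W', and that P ∩ W = F and P ∩ W' = F. Then the intersection W ∩ W' has dimension d, i.e. the affine span of W ∩ W' is all of ℝ^d. -/
open Matrix

/-- A face of a polytope `P`: the intersection of `P` with a supporting hyperplane. -/
def IsFace {d : ℕ} (P F : Set (Fin d → ℝ)) : Prop :=
  ∃ (c : Fin d → ℝ) (c₀ : ℝ), (∀ x ∈ P, c ⬝ᵥ x ≤ c₀) ∧ F = {x ∈ P | c ⬝ᵥ x = c₀}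

open Classical in
/-- The dimension of a subset of `ℝ^d`: the dimension of its affine span
(with the convention that the empty set has dimension `-1`). -/
noncomputable def setDim {d : ℕ} (s : Set (Fin d → ℝ)) : ℤ :=
  if s = ∅ then -1 else (Module.finrank ℝ (affineSpan ℝ s).direction : ℤ)

/-- A facet of a polytope `P`: a face of dimension `dim P - 1`. -/
def IsFacet {d : ℕ} (P F : Set (Fin d → ℝ)) : Prop :=
  IsFace P F ∧ setDim F = setDim P - 1

/-!
Let `H` be the affine span of `F`, a hyperplane, and `x` a point of the relative interior of `F`.
If a convex set `Q ⊇ F` contains a point `s ∉ H`, then `Q` contains all points close to `x` on the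
side of `H` containing `s`. So two convex sets containing `F` and points strictly on the same side
of `H` share a point off `H`. As `P ∩ W = F ⊆ H`, `W` lies on the side of `H` opposite to `P`, and
so does `W'`; hence `W ∩ W'` contains `F` and a point off `H`, and its affine span is everything.
-/

open Filter Topology AffineMap

theorem AffineSubspace.sSameSide_or_sOppSide_of_isCoatom_direction {R V P : Type*} [Field R]
    [LinearOrder R] [IsStrictOrderedRing R] [AddCommGroup V] [Module R V] [AddTorsor V P]
    {s : AffineSubspace R P} (hs : IsCoatom s.direction) {p x y : P} (hp : p ∈ s) (hx : x ∉ s)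
    (hy : y ∉ s) :
    s.SSameSide x y ∨ s.SOppSide x y := by
  have hxp : x -ᵥ p ∉ s.direction := by rwa [vsub_right_mem_direction_iff_mem hp]
  obtain ⟨k, hk, w, hw, hkw⟩ := Submodule.mem_sup.1
    ((Submodule.isCompl_span_singleton_of_isCoatom_of_notMem hs hxp).sup_eq_top ▸
      Submodule.mem_top (x := y -ᵥ p))
  obtain ⟨r, rfl⟩ := Submodule.mem_span_singleton.1 hw
  have hkp : k +ᵥ p ∈ s := AffineSubspace.vadd_mem_of_mem_direction hk hp
  have hy' : y = r • (x -ᵥ p) +ᵥ (k +ᵥ p) := by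
    rw [vadd_vadd, add_comm, hkw, vsub_vadd]
  rcases lt_trichotomy r 0 with hr | rfl | hr
  · exact .inr (hy' ▸ AffineSubspace.sOppSide_smul_vsub_vadd_right hx hp hkp hr)
  · rw [hy', zero_smul, zero_vadd] at hy
    exact absurd hkp hy
  · exact .inl (hy' ▸ AffineSubspace.sSameSide_smul_vsub_vadd_right hx hp hkp hr)

theorem AffineSubspace.eq_top_of_isCoatom_direction_of_lt {k V P : Type*} [Ring k]
    [AddCommGroup V] [Module k V] [AddTorsor V P] {s t : AffineSubspace k P}
    (hs : IsCoatom s.direction) (hne : (s : Set P).Nonempty) (hst : s < t) : t = ⊤ :=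
  (AffineSubspace.direction_eq_top_iff_of_nonempty (hne.mono hst.le)).1
    (hs.2 _ (AffineSubspace.direction_lt_of_nonempty hst hne))

theorem Submodule.isCoatom_of_finrank_add_one_eq {K V : Type*} [DivisionRing K] [AddCommGroup V]
    [Module K V] [FiniteDimensional K V] {S : Submodule K V}
    (h : Module.finrank K S + 1 = Module.finrank K V) : IsCoatom S := by
  refine ⟨fun hS => by rw [hS, finrank_top] at h; omega, fun T hST => ?_⟩
  have := Submodule.finrank_lt_finrank_of_lt hST
  exact Submodule.eq_top_of_finrank_eq (le_antisymm (Submodule.finrank_le T) (by omega))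

section IntrinsicInterior

variable {E : Type*} [AddCommGroup E] [Module ℝ E] [TopologicalSpace E]
  [IsTopologicalAddGroup E] [ContinuousSMul ℝ E] {F Q : Set E} {x : E}

theorem eventually_add_smul_mem_of_mem_intrinsicInterior (hx : x ∈ intrinsicInterior ℝ F)
    {u : E} (hu : u ∈ (affineSpan ℝ F).direction) : ∀ᶠ t in 𝓝 (0 : ℝ), x + t • u ∈ F := by
  obtain ⟨y, hy, rfl⟩ := hx
  let g : ℝ → affineSpan ℝ F := fun t =>
    ⟨t • u +ᵥ (y : E), AffineSubspace.vadd_mem_of_mem_direction (Submodule.smul_mem _ t hu) y.2⟩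
  have hg : Continuous g := by fun_prop
  have hg0 : g 0 = y := by ext; simp [g]
  filter_upwards [hg.continuousAt.preimage_mem_nhds (hg0 ▸ mem_interior_iff_mem_nhds.1 hy)]
    with t ht
  simpa [g, add_comm] using ht

theorem Convex.eventually_add_smul_add_smul_sub_mem (hQ : Convex ℝ Q) (hFQ : F ⊆ Q)
    (hx : x ∈ intrinsicInterior ℝ F) {s u : E} (hs : s ∈ Q) (hu : u ∈ (affineSpan ℝ F).direction)
    {r : ℝ} (hr : 0 ≤ r) : ∀ᶠ t in 𝓝[>] (0 : ℝ), x + t • (u + r • (s - x)) ∈ Q := by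
  have hxQ : x ∈ Q := hFQ (intrinsicInterior_subset hx)
  have hF : ∀ᶠ t in 𝓝[>] (0 : ℝ), x + t • ((2 : ℝ) • u) ∈ F :=
    (eventually_add_smul_mem_of_mem_intrinsicInterior hx (Submodule.smul_mem _ 2 hu)).filter_mono
      nhdsWithin_le_nhds
  have hsmall : ∀ᶠ t in 𝓝[>] (0 : ℝ), 2 * t * r ≤ 1 :=
    (((show Continuous fun t : ℝ => 2 * t * r by fun_prop).tendsto' 0 0 (by simp)).eventually
      (eventually_le_nhds one_pos)).filter_mono nhdsWithin_le_nhds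
  filter_upwards [hF, hsmall, self_mem_nhdsWithin] with t hFt hsmall (ht : 0 < t)
  have hmid : x + t • (u + r • (s - x)) =
      (1 / 2 : ℝ) • (x + t • ((2 : ℝ) • u)) + (1 / 2 : ℝ) • (x + (2 * t * r) • (s - x)) := by module
  rw [hmid]
  exact hQ (hFQ hFt) (hQ.add_smul_sub_mem hxQ hs ⟨by positivity, hsmall⟩)
    (by norm_num) (by norm_num) (by norm_num)

theorem exists_mem_inter_notMem_affineSpan_of_sSameSide {Q' : Set E} (hQ : Convex ℝ Q)
    (hQ' : Convex ℝ Q') (hFQ : F ⊆ Q) (hFQ' : F ⊆ Q') (hx : x ∈ intrinsicInterior ℝ F)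
    {s y : E} (hs : s ∈ Q) (hy : y ∈ Q') (hsy : (affineSpan ℝ F).SSameSide s y) :
    ∃ z ∈ Q ∩ Q', z ∉ affineSpan ℝ F := by
  have hxF : x ∈ F := intrinsicInterior_subset hx
  have hxH : x ∈ affineSpan ℝ F := subset_affineSpan ℝ F hxF
  obtain ⟨hsH, hyH, p, hp, hray⟩ := (AffineSubspace.sSameSide_iff_exists_left hxH).1 hsy
  obtain ⟨r, hr, hrs⟩ :=
    hray.exists_nonneg_left (vsub_ne_zero.2 (ne_of_mem_of_not_mem hxH hsH).symm)
  have hyx : y - x = (p - x) + r • (s - x) := by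
    rw [← vsub_eq_sub s, hrs, vsub_eq_sub]; abel
  have hQt := hQ.eventually_add_smul_add_smul_sub_mem hFQ hx hs
    (AffineSubspace.vsub_mem_direction hp hxH) hr
  obtain ⟨t, hQt, ht⟩ := (hQt.and (Ioc_mem_nhdsGT one_pos)).exists
  refine ⟨lineMap x y t, ⟨?_, hQ'.lineMap_mem (hFQ' hxF) hy ⟨ht.1.le, ht.2⟩⟩,
    (AffineSubspace.sSameSide_lineMap_left hxH hyH ht.1).left_notMem⟩
  rwa [lineMap_apply_module', hyx, add_comm]

theorem sOppSide_of_inter_subset_affineSpan {Q' : Set E} (hQ : Convex ℝ Q) (hQ' : Convex ℝ Q')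
    (hFQ : F ⊆ Q) (hFQ' : F ⊆ Q') (hx : x ∈ intrinsicInterior ℝ F)
    (hF : IsCoatom (affineSpan ℝ F).direction) (hQQ' : Q ∩ Q' ⊆ affineSpan ℝ F)
    {s y : E} (hs : s ∈ Q) (hsF : s ∉ affineSpan ℝ F) (hy : y ∈ Q') (hyF : y ∉ affineSpan ℝ F) :
    (affineSpan ℝ F).SOppSide s y := by
  refine (AffineSubspace.sSameSide_or_sOppSide_of_isCoatom_direction hF
    (subset_affineSpan ℝ F (intrinsicInterior_subset hx)) hsF hyF).resolve_left fun hsy => ?_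
  obtain ⟨z, hz, hzF⟩ :=
    exists_mem_inter_notMem_affineSpan_of_sSameSide hQ hQ' hFQ hFQ' hx hs hy hsy
  exact hzF (hQQ' hz)

end IntrinsicInterior

section Polytope

variable {d : ℕ} {P F : Set (Fin d → ℝ)}

theorem setDim_empty : setDim (∅ : Set (Fin d → ℝ)) = -1 := by
  simp [setDim]

theorem setDim_of_nonempty (h : P.Nonempty) :
    setDim P = Module.finrank ℝ (affineSpan ℝ P).direction := by
  simp [setDim, h.ne_empty]

theorem setDim_of_affineSpan_eq_top (h : affineSpan ℝ P = ⊤) : setDim P = d := by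
  have hP : P.Nonempty := (affineSpan_nonempty ℝ).1 (by simp [h])
  rw [setDim_of_nonempty hP, h, AffineSubspace.direction_top, finrank_top, Module.finrank_fin_fun]

theorem IsFace.subset (h : IsFace P F) : F ⊆ P := by
  obtain ⟨c, c₀, -, rfl⟩ := h
  exact Set.sep_subset _ _

theorem IsFace.inter_affineSpan_subset (h : IsFace P F) : P ∩ affineSpan ℝ F ⊆ F := by
  obtain ⟨c, c₀, -, rfl⟩ := h
  let hyperplane : AffineSubspace ℝ (Fin d → ℝ) :=
    (affineSpan ℝ {c₀}).comap (dotProductBilin ℝ ℝ c).toAffineMap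
  have hspan : affineSpan ℝ {x ∈ P | c ⬝ᵥ x = c₀} ≤ hyperplane :=
    affineSpan_le_of_subset_coe fun x hx => by simp [hyperplane, hx.2]
  rintro x ⟨hxP, hxF⟩
  exact ⟨hxP, by simpa [hyperplane, AffineSubspace.mem_comap,
    AffineSubspace.mem_affineSpan_singleton] using hspan hxF⟩

theorem IsFacet.ne (h : IsFacet P F) : F ≠ P := by
  rintro rfl
  have := h.2
  omega

theorem IsFacet.nonempty (h : IsFacet P F) : P.Nonempty := by
  rw [Set.nonempty_iff_ne_empty]
  rintro rfl
  exact h.ne (Set.subset_empty_iff.1 h.1.subset)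

theorem IsFacet.exists_mem_notMem_affineSpan (h : IsFacet P F) :
    ∃ s ∈ P, s ∉ affineSpan ℝ F := by
  obtain ⟨s, hsP, hsF⟩ := Set.exists_of_ssubset (h.1.subset.ssubset_of_ne h.ne)
  exact ⟨s, hsP, fun hsH => hsF (h.1.inter_affineSpan_subset ⟨hsP, hsH⟩)⟩

theorem IsFacet.isCoatom_direction_affineSpan (hP : affineSpan ℝ P = ⊤) (h : IsFacet P F)
    (hF : F.Nonempty) : IsCoatom (affineSpan ℝ F).direction := by
  refine Submodule.isCoatom_of_finrank_add_one_eq ?_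
  have := h.2
  rw [setDim_of_nonempty hF, setDim_of_affineSpan_eq_top hP] at this
  rw [Module.finrank_fin_fun]
  omega

theorem IsFacet.nonempty_of_inter_eq {W : Set (Fin d → ℝ)} (hP : affineSpan ℝ P = ⊤)
    (hFP : IsFacet P F) (hFW : IsFacet W F) (hPW : P ∩ W = F) : F.Nonempty := by
  rw [Set.nonempty_iff_ne_empty]
  rintro rfl
  have hd : d = 0 := by
    have := hFP.2
    rw [setDim_empty, setDim_of_affineSpan_eq_top hP] at this
    omega
  subst hd
  obtain ⟨p, hp⟩ := hFP.nonempty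
  obtain ⟨w, hw⟩ := hFW.nonempty
  exact (hPW ▸ ⟨hp, Subsingleton.elim w p ▸ hw⟩ : p ∈ (∅ : Set _))

end Polytope

theorem inter_fullDim_of_common_facet_general {d : ℕ}
    (SP SW SW' : Set (Fin d → ℝ))
    (hdP : affineSpan ℝ (convexHull ℝ SP) = ⊤)
    (F : Set (Fin d → ℝ))
    (hFP : IsFacet (convexHull ℝ SP) F)
    (hFW : IsFacet (convexHull ℝ SW) F)
    (hFW' : IsFacet (convexHull ℝ SW') F)
    (hPW : convexHull ℝ SP ∩ convexHull ℝ SW = F)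
    (hPW' : convexHull ℝ SP ∩ convexHull ℝ SW' = F) :
    affineSpan ℝ (convexHull ℝ SW ∩ convexHull ℝ SW') = ⊤ := by
  have hFne : F.Nonempty := hFP.nonempty_of_inter_eq hdP hFW hPW
  have hH : IsCoatom (affineSpan ℝ F).direction := hFP.isCoatom_direction_affineSpan hdP hFne
  have hFconv : Convex ℝ F := hPW ▸ (convex_convexHull ℝ SP).inter (convex_convexHull ℝ SW)
  obtain ⟨x, hx⟩ := hFne.intrinsicInterior hFconv
  obtain ⟨p, hp, hpF⟩ := hFP.exists_mem_notMem_affineSpan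
  obtain ⟨w, hw, hwF⟩ := hFW.exists_mem_notMem_affineSpan
  obtain ⟨w', hw', hw'F⟩ := hFW'.exists_mem_notMem_affineSpan
  have hpw := sOppSide_of_inter_subset_affineSpan (convex_convexHull ℝ SP)
    (convex_convexHull ℝ SW) hFP.1.subset hFW.1.subset hx hH (hPW ▸ subset_affineSpan ℝ F)
    hp hpF hw hwF
  have hpw' := sOppSide_of_inter_subset_affineSpan (convex_convexHull ℝ SP)
    (convex_convexHull ℝ SW') hFP.1.subset hFW'.1.subset hx hH (hPW' ▸ subset_affineSpan ℝ F)
    hp hpF hw' hw'F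
  obtain ⟨z, hz, hzF⟩ := exists_mem_inter_notMem_affineSpan_of_sSameSide
    (convex_convexHull ℝ SW) (convex_convexHull ℝ SW') hFW.1.subset hFW'.1.subset hx hw hw'
    (hpw.symm.trans hpw')
  refine AffineSubspace.eq_top_of_isCoatom_direction_of_lt hH
    ((affineSpan_nonempty ℝ).2 hFne) (lt_of_le_of_ne ?_ ?_)
  · exact affineSpan_mono ℝ (Set.subset_inter hFW.1.subset hFW'.1.subset)
  · exact fun h => hzF (h ▸ subset_affineSpan ℝ _ hz)

theorem inter_fullDim_of_common_facet {d : ℕ}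
    (SP SW SW' : Set (Fin d → ℝ)) (hSP : SP.Finite) (hSW : SW.Finite) (hSW' : SW'.Finite)
    (hdP : affineSpan ℝ (convexHull ℝ SP) = ⊤)
    (hdW : affineSpan ℝ (convexHull ℝ SW) = ⊤)
    (hdW' : affineSpan ℝ (convexHull ℝ SW') = ⊤)
    (F : Set (Fin d → ℝ))
    (hFP : IsFacet (convexHull ℝ SP) F)
    (hFW : IsFacet (convexHull ℝ SW) F)
    (hFW' : IsFacet (convexHull ℝ SW') F)
    (hPW : convexHull ℝ SP ∩ convexHull ℝ SW = F)
    (hPW' : convexHull ℝ SP ∩ convexHull ℝ SW' = F) :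
    affineSpan ℝ (convexHull ℝ SW ∩ convexHull ℝ SW') = ⊤ :=
  inter_fullDim_of_common_facet_general SP SW SW' hdP F hFP hFW hFW' hPW hPW'
end

section
/- Let T be a neighbor-b-index-tree, v ∈ V and f ∈ F. If there is a depth-k f-neighbor w of v, then: w is the only f-neighbor of v (i.e. any depth-k' f-neighbor of v equals w), the depth k is unique (any k' for which v has a depth-k' f-neighbor equals k), ℓ(w) = ℓ(v), and k ≤ ℓ(v). -/
/-- A `b`-index-tree: `V` with root `r`, a bijective child function
`C : V × B → V \ {r}`, the parent function `P`, the level function `ℓ`, and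
the index function `I` (`P` and `I` are only meaningful away from the root;
their defining laws are stated for non-root nodes). -/
structure BIndexTree (b : ℕ) (V : Type) where
  root : V
  child : V → Fin b → V
  parent : V → V
  idx : V → Fin b
  lvl : V → ℕ
  child_ne_root : ∀ v j, child v j ≠ root
  child_inj : Function.Injective fun p : V × Fin b => child p.1 p.2
  child_surj : ∀ w, w ≠ root → ∃ v j, child v j = w
  parent_child : ∀ v j, parent (child v j) = v
  lvl_root : lvl root = 0
  lvl_eq : ∀ v, v ≠ root → lvl v = lvl (parent v) + 1
  child_parent_idx : ∀ v, v ≠ root → child (parent v) (idx v) = v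

/-- A neighbor-`b`-index-tree: a `b`-index-tree together with states,
facet labels, and the lookup functions `N`, `Ω`, `Fᵖ` (`⊥` is modeled by `none`). -/
structure NeighborTree (b : ℕ) (V S F : Type) extends BIndexTree b V where
  state : V → S
  N : Fin b → S → F → Option (Fin b)
  Om : Fin b → S → S → F → Option (Fin b)
  Fp : Fin b → S → F → Option F

/-- `IsDepthNbr T k f v w`: `w` is a depth-`k` `f`-neighbor of `v`. -/
def IsDepthNbr {b : ℕ} {V S F : Type} (T : NeighborTree b V S F) :
    ℕ → F → V → V → Prop
  | 0, _, _, _ => False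
  | 1, f, v, w =>
      v ≠ T.root ∧ w ≠ T.root ∧
      ∃ j : Fin b, T.N (T.idx v) (T.state (T.parent v)) f = some j ∧
        w = T.child (T.parent v) j
  | (k + 2), f, v, w =>
      v ≠ T.root ∧ w ≠ T.root ∧
      T.N (T.idx v) (T.state (T.parent v)) f = none ∧
      ∃ fp : F, T.Fp (T.idx v) (T.state (T.parent v)) f = some fp ∧
        IsDepthNbr T (k + 1) fp (T.parent v) (T.parent w) ∧
        T.Om (T.idx v) (T.state (T.parent v)) (T.state (T.parent w)) f = some (T.idx w)

/-!
All four claims follow by induction on the depth along the recursion defining `IsDepthNbr`: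
a depth-`1` neighbor is the sibling selected by `N`, and a depth-`(k + 2)` neighbor is the child,
selected by `Ω`, of the (inductively unique) depth-`(k + 1)` neighbor of the parent. Since a
non-root node is determined by its parent and its index, uniqueness propagates, and each step
up the tree adds one to both levels and one to the depth.
-/

namespace BIndexTree

variable {b : ℕ} {V : Type} (T : BIndexTree b V)

theorem lvl_child (v : V) (j : Fin b) : T.lvl (T.child v j) = T.lvl v + 1 := by
  rw [T.lvl_eq _ (T.child_ne_root v j), T.parent_child]

theorem eq_of_parent_eq_of_idx_eq {w w' : V} (hw : w ≠ T.root) (hw' : w' ≠ T.root)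
    (hp : T.parent w = T.parent w') (hi : T.idx w = T.idx w') : w = w' := by
  rw [← T.child_parent_idx w hw, ← T.child_parent_idx w' hw', hp, hi]

end BIndexTree

namespace IsDepthNbr

variable {b : ℕ} {V S F : Type} {T : NeighborTree b V S F}

theorem lvl_eq : ∀ {k : ℕ} {f : F} {v w : V}, IsDepthNbr T k f v w → T.lvl w = T.lvl v
  | 1, _, v, _, ⟨hv, _, _, _, hw⟩ => by rw [hw, T.lvl_child, T.lvl_eq v hv]
  | _ + 2, _, v, w, ⟨hv, hw, _, _, _, hrec, _⟩ => by
    rw [T.lvl_eq w hw, T.lvl_eq v hv, hrec.lvl_eq]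

theorem le_lvl : ∀ {k : ℕ} {f : F} {v w : V}, IsDepthNbr T k f v w → k ≤ T.lvl v
  | 1, _, v, _, ⟨hv, _⟩ => by rw [T.lvl_eq v hv]; omega
  | _ + 2, _, v, _, ⟨hv, _, _, _, _, hrec, _⟩ => by
    have := hrec.le_lvl
    rw [T.lvl_eq v hv]; omega

theorem unique : ∀ {k k' : ℕ} {f : F} {v w w' : V},
    IsDepthNbr T k f v w → IsDepthNbr T k' f v w' → w' = w ∧ k' = k
  | 1, 1, _, _, _, _, ⟨_, _, _, hj, hw⟩, ⟨_, _, _, hj', hw'⟩ => by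
    rw [hj] at hj'
    cases hj'
    exact ⟨hw'.trans hw.symm, rfl⟩
  | 1, _ + 2, _, _, _, _, ⟨_, _, _, hj, _⟩, ⟨_, _, hn, _⟩ => by simp [hj] at hn
  | _ + 2, 1, _, _, _, _, ⟨_, _, hn, _⟩, ⟨_, _, _, hj, _⟩ => by simp [hj] at hn
  | _ + 2, _ + 2, _, _, _, _, ⟨_, hw, _, _, hfp, hrec, hom⟩, ⟨_, hw', _, _, hfp', hrec', hom'⟩ => by
    rw [hfp] at hfp'
    cases hfp'
    obtain ⟨hpar, hk⟩ := unique hrec hrec'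
    rw [hpar, hom, Option.some_inj] at hom'
    exact ⟨T.eq_of_parent_eq_of_idx_eq hw' hw hpar hom'.symm, by omega⟩

end IsDepthNbr

theorem neighbor_unique_and_level_general {b : ℕ} {V S F : Type}
    (T : NeighborTree b V S F)
    (v w : V) (f : F) (k : ℕ) (h : IsDepthNbr T k f v w) :
    -- `w` is the only `f`-neighbor of `v`
    (∀ (w' : V) (k' : ℕ), IsDepthNbr T k' f v w' → w' = w) ∧
    -- the depth `k` is unique
    (∀ k' : ℕ, (∃ w' : V, IsDepthNbr T k' f v w') → k' = k) ∧
    -- `ℓ(w) = ℓ(v)`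
    T.lvl w = T.lvl v ∧
    -- `k ≤ ℓ(v)`
    k ≤ T.lvl v :=
  ⟨fun _ _ h' => (h.unique h').1, fun _ ⟨_, h'⟩ => (h.unique h').2, h.lvl_eq, h.le_lvl⟩

theorem neighbor_unique_and_level {b : ℕ} (hb : 2 ≤ b) {V S F : Type}
    [Finite S] [Finite F] (T : NeighborTree b V S F)
    (v w : V) (f : F) (k : ℕ) (h : IsDepthNbr T k f v w) :
    -- `w` is the only `f`-neighbor of `v`
    (∀ (w' : V) (k' : ℕ), IsDepthNbr T k' f v w' → w' = w) ∧
    -- the depth `k` is unique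
    (∀ k' : ℕ, (∃ w' : V, IsDepthNbr T k' f v w') → k' = k) ∧
    -- `ℓ(w) = ℓ(v)`
    T.lvl w = T.lvl v ∧
    -- `k ≤ ℓ(v)`
    k ≤ T.lvl v :=
  neighbor_unique_and_level_general T v w f k h
end

section
/- Let T be a neighbor-b-index-tree and define the function Neighbor : V × F → V ∪ {⊥} by recursion on ℓ(v) as follows: if ℓ(v) = 0, return ⊥; otherwise set j_w := N(I(v), S(P(v)), f); if j_w ≠ ⊥, return C(P(v), j_w); otherwise set f_p := F^p(I(v), S(P(v)), f); if f_p = ⊥, return ⊥; otherwise set p_w := Neighbor(P(v), f_p); if p_w = ⊥, return ⊥; otherwise set j̃ := Ω(I(v), S(P(v)), S(p_w), f); if j̃ = ⊥, return ⊥; otherwise return C(p_w, j̃). Then for all v ∈ V and f ∈ F: if v has an f-neighbor w, then Neighbor(v, f) = w; and if v has no f-neighbor, then Neighbor(v, f) = ⊥. -/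
/-- The neighbor-finding algorithm, defined by recursion on the level of `v`. -/
def neighborFn {b : ℕ} {V S F : Type} (T : NeighborTree b V S F)
    (v : V) (f : F) : Option V :=
  if h : T.lvl v = 0 then none
  else
    match T.N (T.idx v) (T.state (T.parent v)) f with
    | some jw => some (T.child (T.parent v) jw)
    | none =>
      match T.Fp (T.idx v) (T.state (T.parent v)) f with
      | none => none
      | some fp =>
        match neighborFn T (T.parent v) fp with
        | none => none
        | some pw =>
          match T.Om (T.idx v) (T.state (T.parent v)) (T.state pw) f with
          | none => none
          | some jt => some (T.child pw jt)
termination_by T.lvl v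
decreasing_by
  have hv : v ≠ T.root := fun hv => h (hv ▸ T.lvl_root)
  have := T.lvl_eq v hv
  omega

/-!
Both halves follow from `neighborFn T v f = some w ↔ w is an f-neighbor of v`, proved by
induction on `ℓ(v)`. Away from the root, the algorithm and the neighbor relation branch on the
same lookup `N`. If it answers `j`, both give `C(P(v), j)`. Otherwise `w` is an `f`-neighbor of
`v` iff `P(w)` is an `f_p`-neighbor of `P(v)` and `Ω` returns `I(w)`; by induction the recursive
call finds exactly `P(w)`, and `w = C(P(w), I(w))` is then what the algorithm returns.
-/

namespace BIndexTree

variable {b : ℕ} {V : Type} (T : BIndexTree b V)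

theorem lvl_eq_zero_iff {v : V} : T.lvl v = 0 ↔ v = T.root := by
  refine ⟨fun h => ?_, fun h => h ▸ T.lvl_root⟩
  by_contra hv
  have := T.lvl_eq v hv
  omega

theorem idx_child (v : V) (j : Fin b) : T.idx (T.child v j) = j := by
  have h := T.child_parent_idx (T.child v j) (T.child_ne_root v j)
  rw [T.parent_child] at h
  exact (Prod.ext_iff.1 (T.child_inj (a₁ := (v, _)) (a₂ := (v, j)) h)).2

end BIndexTree

namespace NeighborTree

variable {b : ℕ} {V S F : Type} (T : NeighborTree b V S F)

def IsNbr (f : F) (v w : V) : Prop :=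
  ∃ k, IsDepthNbr T k f v w

theorem not_isNbr_root (f : F) (w : V) : ¬ T.IsNbr f T.root w := by
  rintro ⟨_ | _ | k, h⟩
  exacts [h, h.1 rfl, h.1 rfl]

variable {T} {f : F} {v w : V}

theorem isNbr_iff_of_N_eq_some {j : Fin b} (hv : v ≠ T.root)
    (hN : T.N (T.idx v) (T.state (T.parent v)) f = some j) :
    T.IsNbr f v w ↔ w = T.child (T.parent v) j := by
  constructor
  · rintro ⟨_ | _ | k, h⟩
    · exact h.elim
    · obtain ⟨-, -, j', hj', rfl⟩ := h
      rw [hN, Option.some_inj] at hj'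
      rw [hj']
    · exact absurd (hN ▸ h.2.2.1) (Option.some_ne_none j)
  · rintro rfl
    exact ⟨1, hv, T.child_ne_root _ _, j, hN, rfl⟩

theorem isNbr_iff_of_N_eq_none (hv : v ≠ T.root)
    (hN : T.N (T.idx v) (T.state (T.parent v)) f = none) :
    T.IsNbr f v w ↔ w ≠ T.root ∧ ∃ fp, T.Fp (T.idx v) (T.state (T.parent v)) f = some fp ∧
      T.IsNbr fp (T.parent v) (T.parent w) ∧
      T.Om (T.idx v) (T.state (T.parent v)) (T.state (T.parent w)) f = some (T.idx w) := by
  constructor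
  · rintro ⟨_ | _ | k, h⟩
    · exact h.elim
    · obtain ⟨-, -, j, hj, -⟩ := h
      exact absurd (hN ▸ hj) (Option.some_ne_none j).symm
    · obtain ⟨-, hw, -, fp, hF, hpar, hOm⟩ := h
      exact ⟨hw, fp, hF, ⟨k + 1, hpar⟩, hOm⟩
  · rintro ⟨hw, fp, hF, ⟨_ | k, hpar⟩, hOm⟩
    · exact hpar.elim
    · exact ⟨k + 2, hv, hw, hN, fp, hF, hpar, hOm⟩

theorem neighborFn_root (f : F) : neighborFn T T.root f = none := by
  rw [neighborFn, dif_pos T.lvl_root]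

theorem neighborFn_of_N_eq_some {j : Fin b} (hv : v ≠ T.root)
    (hN : T.N (T.idx v) (T.state (T.parent v)) f = some j) :
    neighborFn T v f = some (T.child (T.parent v) j) := by
  rw [neighborFn, dif_neg (mt T.lvl_eq_zero_iff.1 hv), hN]

theorem neighborFn_of_N_eq_none (hv : v ≠ T.root)
    (hN : T.N (T.idx v) (T.state (T.parent v)) f = none) :
    neighborFn T v f = (T.Fp (T.idx v) (T.state (T.parent v)) f).bind fun fp =>
      (neighborFn T (T.parent v) fp).bind fun pw =>
        (T.Om (T.idx v) (T.state (T.parent v)) (T.state pw) f).map (T.child pw) := by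
  rw [neighborFn, dif_neg (mt T.lvl_eq_zero_iff.1 hv), hN]
  cases T.Fp (T.idx v) (T.state (T.parent v)) f with
  | none => rfl
  | some fp =>
    dsimp only [Option.bind_some]
    cases neighborFn T (T.parent v) fp with
    | none => rfl
    | some pw =>
      dsimp only [Option.bind_some]
      cases T.Om (T.idx v) (T.state (T.parent v)) (T.state pw) f <;> rfl

theorem neighborFn_eq_some_iff : neighborFn T v f = some w ↔ T.IsNbr f v w := by
  induction hn : T.lvl v generalizing v f w with
  | zero =>
    obtain rfl := T.lvl_eq_zero_iff.1 hn
    rw [neighborFn_root]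
    exact iff_of_false nofun (T.not_isNbr_root f w)
  | succ n ih =>
    have hv : v ≠ T.root := mt T.lvl_eq_zero_iff.2 (by omega)
    have hpar : T.lvl (T.parent v) = n := by have := T.lvl_eq v hv; omega
    rcases hN : T.N (T.idx v) (T.state (T.parent v)) f with _ | j
    · rw [neighborFn_of_N_eq_none hv hN, isNbr_iff_of_N_eq_none hv hN]
      simp only [Option.bind_eq_some_iff, Option.map_eq_some_iff, ih hpar]
      constructor
      · rintro ⟨fp, hF, pw, hpw, jt, hOm, rfl⟩
        rw [T.parent_child, T.idx_child]
        exact ⟨T.child_ne_root pw jt, fp, hF, hpw, hOm⟩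
      · rintro ⟨hw, fp, hF, hpw, hOm⟩
        exact ⟨fp, hF, _, hpw, _, hOm, T.child_parent_idx w hw⟩
    · rw [neighborFn_of_N_eq_some hv hN, isNbr_iff_of_N_eq_some hv hN, Option.some_inj, eq_comm]

end NeighborTree

theorem neighborFn_correct_general {b : ℕ} {V S F : Type}
    (T : NeighborTree b V S F) :
    ∀ (v : V) (f : F),
      (∀ w : V, (∃ k : ℕ, IsDepthNbr T k f v w) → neighborFn T v f = some w) ∧
      ((¬ ∃ w : V, ∃ k : ℕ, IsDepthNbr T k f v w) → neighborFn T v f = none) := by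
  intro v f
  refine ⟨fun w hw => NeighborTree.neighborFn_eq_some_iff.2 hw, fun hno => ?_⟩
  rw [Option.eq_none_iff_forall_ne_some]
  exact fun w hw => hno ⟨w, NeighborTree.neighborFn_eq_some_iff.1 hw⟩

theorem neighborFn_correct {b : ℕ} (hb : 2 ≤ b) {V S F : Type}
    [Finite S] [Finite F] (T : NeighborTree b V S F) :
    ∀ (v : V) (f : F),
      (∀ w : V, (∃ k : ℕ, IsDepthNbr T k f v w) → neighborFn T v f = some w) ∧
      ((¬ ∃ w : V, ∃ k : ℕ, IsDepthNbr T k f v w) → neighborFn T v f = none) :=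
  neighborFn_correct_general T
end

section
/- Let a b-specification be given and let u : S → B* be a pre-representation, i.e. σ(u(s)) = s for all s ∈ S and u(s_r) = ε (the empty word). Then the induced geometric tree is pre-regular if and only if u is pre-regular, i.e.: (P1') for all s ∈ S and j ∈ B, Q(u(s)·j) ∼ Q(u(σ(u(s)·j))), and (P2') for all s ∈ S, dim(conv(Q(u(s)))) = d. -/
open Matrix BigOperators

/-- A `b`-specification in dimension `d`: states `S` with root state `sr` and
child-state map `Sc` (every state reachable from `sr`), vertex counts `n s ≥ 1`,
a root point matrix `Qr`, and transition matrices `M s j` (all column sums 1). -/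
structure BSpec (d b : ℕ) (S : Type) where
  sr : S
  Sc : S → Fin b → S
  reach : ∀ s : S, ∃ w : List (Fin b), w.foldl Sc sr = s
  n : S → ℕ
  n_pos : ∀ s : S, 1 ≤ n s
  Qr : Matrix (Fin d) (Fin (n sr)) ℝ
  M : (s : S) → (j : Fin b) → Matrix (Fin (n s)) (Fin (n (Sc s j))) ℝ
  M_trans : ∀ (s : S) (j : Fin b) (col : Fin (n (Sc s j))), ∑ i, M s j i col = 1

namespace BSpec

variable {d b : ℕ} {S : Type}

/-- The state `σ(w)` of the tree node given by the word `w` (digits read left to right,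
`σ(ε) = s_r`, `σ(w·j) = S^c(σ(w), j)`). -/
def st (sp : BSpec d b S) (w : List (Fin b)) : S :=
  w.foldl sp.Sc sp.sr

/-- Helper for the point matrices: fold the transition matrices along a word. -/
def Qfrom (sp : BSpec d b S) :
    (s : S) → (w : List (Fin b)) → Matrix (Fin d) (Fin (sp.n s)) ℝ →
      Matrix (Fin d) (Fin (sp.n (w.foldl sp.Sc s))) ℝ
  | _, [], Q => Q
  | s, j :: w, Q => sp.Qfrom (sp.Sc s j) w (Q * sp.M s j)

/-- The point matrix `Q(w)` of the tree node given by the word `w`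
(`Q(ε) = Q^r`, `Q(w·j) = Q(w)·M^{σ(w),j}`). -/
def Qm (sp : BSpec d b S) (w : List (Fin b)) :
    Matrix (Fin d) (Fin (sp.n (sp.st w))) ℝ :=
  sp.Qfrom sp.sr w sp.Qr

end BSpec

/-- The `i`-th column of a matrix, as a point of `ℝ^d`. -/
def colFun {d m : ℕ} (Q : Matrix (Fin d) (Fin m) ℝ) (i : Fin m) : Fin d → ℝ :=
  fun r => Q r i

/-- The convex hull of the columns of `Q`. -/
def convOf {d m : ℕ} (Q : Matrix (Fin d) (Fin m) ℝ) : Set (Fin d → ℝ) :=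
  convexHull ℝ (Set.range (colFun Q))

/-- The family of index sets (as subsets of `ℕ`) of facets of `conv(Q)`. -/
def idxFacets {d m : ℕ} (Q : Matrix (Fin d) (Fin m) ℝ) : Set (Set ℕ) :=
  {I | ∃ F : Set (Fin d → ℝ), IsFacet (convOf Q) F ∧
    I = {i : ℕ | ∃ h : i < m, colFun Q ⟨i, h⟩ ∈ F}}

/-- The convex hull of the columns of `Q` whose index lies in `I`. -/
def facetOfIdx {d m : ℕ} (Q : Matrix (Fin d) (Fin m) ℝ) (I : Set ℕ) :
    Set (Fin d → ℝ) :=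
  convexHull ℝ {x | ∃ i : Fin m, (i : ℕ) ∈ I ∧ x = colFun Q i}

/-- `τ : Q ∼ Q'`: the matrices have the same number of columns and the invertible
affine map `τ` carries the `i`-th column of `Q` to the `i`-th column of `Q'`. -/
def SimBy {d m m' : ℕ} (τ : (Fin d → ℝ) ≃ᵃ[ℝ] (Fin d → ℝ))
    (Q : Matrix (Fin d) (Fin m) ℝ) (Q' : Matrix (Fin d) (Fin m') ℝ) : Prop :=
  m = m' ∧ ∀ (i : ℕ) (h : i < m) (h' : i < m'),
    colFun Q' ⟨i, h'⟩ = τ (colFun Q ⟨i, h⟩)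

/-- `Q ∼ Q'`: some invertible affine map carries the columns of `Q` to those of `Q'`. -/
def Sim {d m m' : ℕ} (Q : Matrix (Fin d) (Fin m) ℝ)
    (Q' : Matrix (Fin d) (Fin m') ℝ) : Prop :=
  ∃ τ : (Fin d → ℝ) ≃ᵃ[ℝ] (Fin d → ℝ), SimBy τ Q Q'

namespace BSpec

variable {d b : ℕ} {S : Type}

/-- `v'` is a geometric neighbor of `v` at the facet index set `I`:
`v` and `v'` are words of equal positive length, `I ∈ indexFacets(Q(v))`,
`conv(Q(v)) ∩ conv(Q(v'))` equals the facet of `conv(Q(v))` spanned by the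
columns indexed by `I`, and this intersection is also a facet of `conv(Q(v'))`. -/
def GeomNbr (sp : BSpec d b S) (v v' : List (Fin b)) (I : Set ℕ) : Prop :=
  v.length = v'.length ∧ v ≠ [] ∧
  I ∈ idxFacets (sp.Qm v) ∧
  convOf (sp.Qm v) ∩ convOf (sp.Qm v') = facetOfIdx (sp.Qm v) I ∧
  IsFacet (convOf (sp.Qm v')) (convOf (sp.Qm v) ∩ convOf (sp.Qm v'))

/-- Pre-regularity: (P1) equal states give affinely equivalent point matrices;
(P2) every node polytope is full-dimensional. -/
def PreRegular (sp : BSpec d b S) : Prop :=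
  (∀ w w' : List (Fin b), sp.st w = sp.st w' → Sim (sp.Qm w) (sp.Qm w')) ∧
  (∀ w : List (Fin b), setDim (convOf (sp.Qm w)) = (d : ℤ))

/-- Regularity: pre-regularity together with (R1), (R2) and (R3). -/
def Regular (sp : BSpec d b S) : Prop :=
  sp.PreRegular ∧
  -- (R1)
  (∀ (v₁ v₂ v₁' v₂' : List (Fin b)) (I : Set ℕ),
    sp.GeomNbr v₁ v₂ I → sp.GeomNbr v₁' v₂' I →
    sp.st v₁ = sp.st v₁' → sp.st v₂ = sp.st v₂' →
    ∃ τ : (Fin d → ℝ) ≃ᵃ[ℝ] (Fin d → ℝ),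
      SimBy τ (sp.Qm v₁) (sp.Qm v₁') ∧ SimBy τ (sp.Qm v₂) (sp.Qm v₂')) ∧
  -- (R2)
  (∀ (w : List (Fin b)) (j : Fin b),
    convOf (sp.Qm (w ++ [j])) ⊆ convOf (sp.Qm w)) ∧
  -- (R3)
  (∀ v v' : List (Fin b), v.length = v'.length →
    (setDim (convOf (sp.Qm v) ∩ convOf (sp.Qm v')) = (d : ℤ) → v = v') ∧
    (setDim (convOf (sp.Qm v) ∩ convOf (sp.Qm v')) = (d : ℤ) - 1 →
      ∃ I ∈ idxFacets (sp.Qm v), sp.GeomNbr v v' I))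

end BSpec


/-!
Each column of `Q(w·j)` is an affine combination of the columns of `Q(w)`, with weights
given by a column of `M^{σ(w),j}`. Affine maps commute with affine combinations, so
`Q(w) ∼ Q(w')` together with `σ(w) = σ(w')` gives `Q(w·j) ∼ Q(w'·j)`. Induction on `w`,
closing each step with (P1'), yields `Q(w) ∼ Q(u(σ(w)))` for every word `w`; since `∼` is an
equivalence relation and an affine equivalence preserves the dimension of a convex hull, this
gives (P1) and (P2).
-/

section Sim

variable {d m m' m'' k : ℕ}

theorem Sim.refl (Q : Matrix (Fin d) (Fin m) ℝ) : Sim Q Q :=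
  ⟨AffineEquiv.refl ℝ _, rfl, fun _ _ _ => rfl⟩

theorem Sim.of_heq {Q : Matrix (Fin d) (Fin m) ℝ} {Q' : Matrix (Fin d) (Fin m') ℝ}
    (hm : m = m') (h : HEq Q Q') : Sim Q Q' := by
  subst hm
  cases h
  exact Sim.refl Q

theorem Sim.symm {Q : Matrix (Fin d) (Fin m) ℝ} {Q' : Matrix (Fin d) (Fin m') ℝ}
    (h : Sim Q Q') : Sim Q' Q := by
  obtain ⟨τ, hm, hcol⟩ := h
  exact ⟨τ.symm, hm.symm, fun i hi hi' => by rw [hcol i hi' hi, AffineEquiv.symm_apply_apply]⟩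

theorem Sim.trans {Q : Matrix (Fin d) (Fin m) ℝ} {Q' : Matrix (Fin d) (Fin m') ℝ}
    {Q'' : Matrix (Fin d) (Fin m'') ℝ} (h : Sim Q Q') (h' : Sim Q' Q'') : Sim Q Q'' := by
  obtain ⟨τ, hm, hcol⟩ := h
  obtain ⟨τ', hm', hcol'⟩ := h'
  refine ⟨τ.trans τ', hm.trans hm', fun i hi hi'' => ?_⟩
  rw [hcol' i (hm ▸ hi) hi'', hcol i hi (hm ▸ hi), AffineEquiv.trans_apply]

theorem SimBy.colFun_eq_comp {τ : (Fin d → ℝ) ≃ᵃ[ℝ] (Fin d → ℝ)}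
    {Q Q' : Matrix (Fin d) (Fin m) ℝ} (h : SimBy τ Q Q') : colFun Q' = τ ∘ colFun Q :=
  funext fun i => h.2 i i.isLt i.isLt

theorem colFun_mul_eq_affineCombination (Q : Matrix (Fin d) (Fin m) ℝ)
    {M : Matrix (Fin m) (Fin k) ℝ} {c : Fin k} (hc : ∑ i, M i c = 1) :
    colFun (Q * M) c = Finset.univ.affineCombination ℝ (colFun Q) (fun i => M i c) := by
  rw [Finset.affineCombination_eq_linear_combination _ _ _ hc]
  funext r
  simp [colFun, Matrix.mul_apply, Finset.sum_apply, mul_comm]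

theorem SimBy.mul_right {τ : (Fin d → ℝ) ≃ᵃ[ℝ] (Fin d → ℝ)} {Q Q' : Matrix (Fin d) (Fin m) ℝ}
    (h : SimBy τ Q Q') {M : Matrix (Fin m) (Fin k) ℝ} (hM : ∀ c, ∑ i, M i c = 1) :
    SimBy τ (Q * M) (Q' * M) := by
  refine ⟨rfl, fun c hc _ => ?_⟩
  rw [colFun_mul_eq_affineCombination _ (hM _), colFun_mul_eq_affineCombination _ (hM _),
    h.colFun_eq_comp, ← AffineEquiv.coe_toAffineMap,
    Finset.map_affineCombination _ _ _ (hM _)]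

theorem Sim.mul_right {Q Q' : Matrix (Fin d) (Fin m) ℝ} (h : Sim Q Q')
    {M : Matrix (Fin m) (Fin k) ℝ} (hM : ∀ c, ∑ i, M i c = 1) : Sim (Q * M) (Q' * M) :=
  let ⟨τ, hτ⟩ := h
  ⟨τ, hτ.mul_right hM⟩

theorem SimBy.convOf_eq_image {τ : (Fin d → ℝ) ≃ᵃ[ℝ] (Fin d → ℝ)}
    {Q : Matrix (Fin d) (Fin m) ℝ} {Q' : Matrix (Fin d) (Fin m') ℝ} (h : SimBy τ Q Q') :
    convOf Q' = τ '' convOf Q := by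
  obtain rfl := h.1
  rw [convOf, convOf, h.colFun_eq_comp, Set.range_comp, ← AffineEquiv.coe_toAffineMap,
    AffineMap.image_convexHull]

end Sim

theorem setDim_image_affineEquiv {d : ℕ} (τ : (Fin d → ℝ) ≃ᵃ[ℝ] (Fin d → ℝ))
    (s : Set (Fin d → ℝ)) : setDim (τ '' s) = setDim s := by
  by_cases hs : s = ∅
  · simp [setDim, hs]
  · rw [setDim, setDim, if_neg hs, if_neg (Set.image_nonempty.2
      (Set.nonempty_iff_ne_empty.2 hs)).ne_empty, ← AffineEquiv.coe_toAffineMap,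
      ← AffineSubspace.map_span, AffineSubspace.map_direction]
    exact congrArg _ (τ.linear.finrank_map_eq _)

theorem Sim.setDim_convOf_eq {d m m' : ℕ} {Q : Matrix (Fin d) (Fin m) ℝ}
    {Q' : Matrix (Fin d) (Fin m') ℝ} (h : Sim Q Q') :
    setDim (convOf Q) = setDim (convOf Q') := by
  obtain ⟨τ, hτ⟩ := h
  rw [hτ.convOf_eq_image, setDim_image_affineEquiv]

namespace BSpec

variable {d b : ℕ} {S : Type} (sp : BSpec d b S)

theorem Qfrom_append :
    ∀ (s : S) (Q : Matrix (Fin d) (Fin (sp.n s)) ℝ) (w v : List (Fin b)),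
      HEq (sp.Qfrom s (w ++ v) Q) (sp.Qfrom (w.foldl sp.Sc s) v (sp.Qfrom s w Q))
  | _, _, [], _ => HEq.rfl
  | s, Q, j :: w, v => Qfrom_append (sp.Sc s j) (Q * sp.M s j) w v

theorem st_append_singleton (w : List (Fin b)) (j : Fin b) :
    sp.st (w ++ [j]) = sp.Sc (sp.st w) j :=
  List.foldl_append ..

theorem sim_Qm_of_eq {w w' : List (Fin b)} (h : w = w') : Sim (sp.Qm w) (sp.Qm w') :=
  h ▸ Sim.refl _

theorem sim_Qm_append_singleton (w : List (Fin b)) (j : Fin b) :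
    Sim (sp.Qm (w ++ [j])) (sp.Qm w * sp.M (sp.st w) j) :=
  Sim.of_heq (congrArg sp.n (sp.st_append_singleton w j)) (sp.Qfrom_append sp.sr sp.Qr w [j])

theorem sim_mul_M {s s' : S} (hs : s = s') {Q : Matrix (Fin d) (Fin (sp.n s)) ℝ}
    {Q' : Matrix (Fin d) (Fin (sp.n s')) ℝ} (h : Sim Q Q') (j : Fin b) :
    Sim (Q * sp.M s j) (Q' * sp.M s' j) := by
  subst hs
  exact h.mul_right (sp.M_trans s j)

theorem sim_Qm_append_singleton_of_st_eq {w w' : List (Fin b)} (hst : sp.st w = sp.st w')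
    (h : Sim (sp.Qm w) (sp.Qm w')) (j : Fin b) :
    Sim (sp.Qm (w ++ [j])) (sp.Qm (w' ++ [j])) :=
  (sp.sim_Qm_append_singleton w j).trans
    ((sp.sim_mul_M hst h j).trans (sp.sim_Qm_append_singleton w' j).symm)

theorem sim_Qm_representative (u : S → List (Fin b)) (hu_state : ∀ s, sp.st (u s) = s)
    (hu_root : u sp.sr = [])
    (hP1 : ∀ s j, Sim (sp.Qm (u s ++ [j])) (sp.Qm (u (sp.st (u s ++ [j]))))) :
    ∀ w, Sim (sp.Qm w) (sp.Qm (u (sp.st w))) := by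
  intro w
  induction w using List.reverseRecOn with
  | nil => exact sp.sim_Qm_of_eq hu_root.symm
  | append_singleton w j ih =>
    have hst : sp.st (u (sp.st w) ++ [j]) = sp.st (w ++ [j]) := by
      rw [sp.st_append_singleton, sp.st_append_singleton, hu_state]
    exact (sp.sim_Qm_append_singleton_of_st_eq (hu_state _).symm ih j).trans
      ((hP1 _ j).trans (sp.sim_Qm_of_eq (congrArg u hst)))

end BSpec

theorem preRegular_iff_preRepresentation_general {d b : ℕ}
    {S : Type} (sp : BSpec d b S)
    (u : S → List (Fin b))
    (hu_state : ∀ s : S, sp.st (u s) = s)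
    (hu_root : u sp.sr = []) :
    sp.PreRegular ↔
      -- (P1') children of representants are equivalent to the representant
      -- of their state
      ((∀ (s : S) (j : Fin b),
          Sim (sp.Qm (u s ++ [j])) (sp.Qm (u (sp.st (u s ++ [j]))))) ∧
      -- (P2') representant polytopes are full-dimensional
       (∀ s : S, setDim (convOf (sp.Qm (u s))) = (d : ℤ))) := by
  constructor
  · rintro ⟨hP1, hP2⟩
    exact ⟨fun s j => hP1 _ _ (hu_state _).symm, fun s => hP2 _⟩
  · rintro ⟨hP1, hP2⟩
    have hrep := sp.sim_Qm_representative u hu_state hu_root hP1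
    refine ⟨fun w w' hst => ?_, fun w => ?_⟩
    · exact (hrep w).trans ((sp.sim_Qm_of_eq (congrArg u hst)).trans (hrep w').symm)
    · rw [(hrep w).setDim_convOf_eq]
      exact hP2 _

theorem preRegular_iff_preRepresentation {d b : ℕ} (hd : 2 ≤ d) (hb : 2 ≤ b)
    {S : Type} [Finite S] (sp : BSpec d b S)
    (u : S → List (Fin b))
    (hu_state : ∀ s : S, sp.st (u s) = s)
    (hu_root : u sp.sr = []) :
    sp.PreRegular ↔
      -- (P1') children of representants are equivalent to the representant
      -- of their state
      ((∀ (s : S) (j : Fin b),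
          Sim (sp.Qm (u s ++ [j])) (sp.Qm (u (sp.st (u s ++ [j]))))) ∧
      -- (P2') representant polytopes are full-dimensional
       (∀ s : S, setDim (convOf (sp.Qm (u s))) = (d : ℤ))) :=
  preRegular_iff_preRepresentation_general sp u hu_state hu_root
end
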